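/- arXiv:1109.2254 — 3 statements merged into one kernel-verified Lean document; each statement's English description precedes it below -/
import Mathlib

section
/- For r, s ∈ ℤ, the half-turn of the plane about the point (r/2, s/2), inducing the cell map (i,j) ↦ (r−1−i, s−1−j), preserves the thick-striping doubled checkerboard colouring d if and only if r and s are both even and r + s is divisible by 4; equivalently, if and only if the centre of the half-turn is a cell corner lying at the centre or at a corner of a 2×2 block of cells of constant colour of d. -/
/-!
Floor halving satisfies `⌊(2m - 1 - i)/2⌋ = m - 1 - ⌊i/2⌋`, so a half-turn about a lattice
point `(m, n)` permutes the `2 × 2` blocks and shifts every colour by `m + n` (mod 2): it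
preserves the colouring exactly when `m + n` is even. About any other centre the half-turn
maps the cells `(0, 0)` and `(1, 0)` (or `(0, 0)` and `(0, 1)`), which share a block, to two
adjacent cells on either side of a block boundary, which have different colours.
-/

/-- The thick-striping (doubled) checkerboard colouring of cells:
`d i j = ⌊i/2⌋ + ⌊j/2⌋ (mod 2)` (floor division). -/
def thickColour (i j : ℤ) : ZMod 2 := ((Int.fdiv i 2 + Int.fdiv j 2 : ℤ) : ZMod 2)

lemma Int.fdiv_two_eq_ediv (i : ℤ) : i.fdiv 2 = i / 2 :=
  Int.fdiv_eq_ediv_of_nonneg i zero_le_two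

lemma thickColour_comm (i j : ℤ) : thickColour i j = thickColour j i := by
  rw [thickColour, thickColour, add_comm]

lemma thickColour_reflect (m n i j : ℤ) :
    thickColour (2 * m - 1 - i) (2 * n - 1 - j) = thickColour i j + ((m + n : ℤ) : ZMod 2) := by
  simp only [thickColour, Int.fdiv_two_eq_ediv, ← Int.cast_add, ZMod.intCast_eq_intCast_iff']
  omega

lemma thickColour_two_mul_sub_one (m j : ℤ) :
    thickColour (2 * m - 1) j = thickColour (2 * m) j + 1 := by
  simp only [thickColour, Int.fdiv_two_eq_ediv]
  rw [← Int.cast_one (R := ZMod 2), ← Int.cast_add, ZMod.intCast_eq_intCast_iff']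
  omega

lemma even_of_thickColour_sub_one_eq_sub_two {r j : ℤ}
    (h : thickColour (r - 1) j = thickColour (r - 2) j) : Even r := by
  obtain ⟨m, rfl | rfl⟩ := Int.even_or_odd' r
  · exact even_two_mul m
  · have h' : thickColour (2 * m) j = thickColour (2 * m) j + 1 := by
      rw [← thickColour_two_mul_sub_one]
      convert h using 2 <;> ring
    exact absurd (left_eq_add.mp h') one_ne_zero

/-- The half-turn about `(r/2, s/2)`, inducing the cell map
`(i,j) ↦ (r−1−i, s−1−j)`, preserves the thick-striping doubled checkerboard
colouring iff `r` and `s` are both even and `4 ∣ r + s`; equivalently, iff the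
centre is a cell corner lying at the centre or at a corner of a 2×2 block of
cells of constant colour. -/
theorem halfTurn_preserves_thickColour_iff (r s : ℤ) :
    (∀ i j : ℤ, thickColour (r - 1 - i) (s - 1 - j) = thickColour i j) ↔
      (Even r ∧ Even s ∧ (4 : ℤ) ∣ r + s) := by
  simp only [even_iff_two_dvd]
  constructor
  · intro h
    have hr : 2 ∣ r := (even_of_thickColour_sub_one_eq_sub_two (j := s - 1) <| by
      simpa [sub_sub, one_add_one_eq_two] using (h 0 0).trans (h 1 0).symm).two_dvd
    have hs : 2 ∣ s := (even_of_thickColour_sub_one_eq_sub_two (j := r - 1) <| by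
      simpa [thickColour_comm _ (r - 1), sub_sub, one_add_one_eq_two] using
        (h 0 0).trans (h 0 1).symm).two_dvd
    obtain ⟨m, rfl⟩ := hr
    obtain ⟨n, rfl⟩ := hs
    have hmn := h 0 0
    rw [thickColour_reflect, add_eq_left, ZMod.intCast_zmod_eq_zero_iff_dvd] at hmn
    exact ⟨dvd_mul_right 2 m, dvd_mul_right 2 n, by omega⟩
  · rintro ⟨⟨m, rfl⟩, ⟨n, rfl⟩, h4⟩ i j
    have hmn : ((m + n : ℤ) : ZMod 2) = 0 := by
      rw [ZMod.intCast_zmod_eq_zero_iff_dvd]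
      omega
    rw [thickColour_reflect, hmn, add_zero]
end

section
/- For r, s ∈ ℤ with r ≡ s (mod 2), the quarter-turn of the plane about the point (r/2, s/2), inducing the cell map (i,j) ↦ ((r+s)/2 − 1 − j, (s−r)/2 + i), preserves the thick-striping doubled checkerboard colouring d if and only if r ≡ 2 (mod 4) and s ≡ 2 (mod 4); equivalently, if and only if the centre of the quarter-turn is a cell corner (a, b) with a and b both odd, i.e. the centre of a 2×2 block of cells of constant colour of d. -/
lemma thickColour_eq_ediv (i j : ℤ) : thickColour i j = ((i / 2 + j / 2 : ℤ) : ZMod 2) := by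
  simp only [thickColour, Int.fdiv_eq_ediv_of_nonneg _ zero_le_two]

lemma thickColour_eq_iff (x y i j : ℤ) :
    thickColour x y = thickColour i j ↔ (x / 2 + y / 2) % 2 = (i / 2 + j / 2) % 2 := by
  rw [thickColour_eq_ediv, thickColour_eq_ediv, ZMod.intCast_eq_intCast_iff']
  rfl

lemma thickColour_add_two_mul (i j a b : ℤ) :
    thickColour (i + 2 * a) (j + 2 * b) = thickColour i j + (a + b : ℤ) := by
  simp only [thickColour_eq_ediv, Int.add_mul_ediv_left _ _ two_ne_zero]
  push_cast
  ring

lemma thickColour_one_sub (i j : ℤ) : thickColour (1 - j) i = thickColour i j := by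
  have h : (1 - j) / 2 = -(j / 2) := by omega
  rw [thickColour_eq_ediv, thickColour_eq_ediv, h]
  push_cast
  rw [ZMod.neg_eq_self_mod_two, add_comm]

lemma thickColour_quarterTurn_blockCentre (m n i j : ℤ) :
    thickColour (1 - j + 2 * (m + n)) (i + 2 * (n - m)) = thickColour i j := by
  rw [thickColour_add_two_mul, thickColour_one_sub, show m + n + (n - m) = 2 * n by ring,
    (ZMod.intCast_zmod_eq_zero_iff_dvd _ 2).2 (dvd_mul_right 2 n), add_zero]

/-- For `r ≡ s (mod 2)`, the quarter-turn about `(r/2, s/2)`, inducing the cell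
map `(i,j) ↦ ((r+s)/2 − 1 − j, (s−r)/2 + i)`, preserves the thick-striping
doubled checkerboard colouring iff `r ≡ 2 (mod 4)` and `s ≡ 2 (mod 4)`, i.e.
iff the centre is a cell corner `(a, b)` with `a`, `b` both odd, the centre of
a 2×2 block of cells of constant colour. -/
theorem quarterTurn_preserves_thickColour_iff (r s : ℤ) (h : r % 2 = s % 2) :
    (∀ i j : ℤ, thickColour ((r + s) / 2 - 1 - j) ((s - r) / 2 + i) = thickColour i j) ↔
      (r % 4 = 2 ∧ s % 4 = 2) := by
  constructor
  · intro H
    have h00 := (thickColour_eq_iff _ _ _ _).1 (H 0 0)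
    have h10 := (thickColour_eq_iff _ _ _ _).1 (H 1 0)
    have h01 := (thickColour_eq_iff _ _ _ _).1 (H 0 1)
    omega
  · rintro ⟨hr, hs⟩ i j
    obtain ⟨m, n, hx, hy⟩ : ∃ m n : ℤ,
        (r + s) / 2 - 1 - j = 1 - j + 2 * (m + n) ∧ (s - r) / 2 + i = i + 2 * (n - m) :=
      ⟨r / 4, s / 4, by omega, by omega⟩
    rw [hx, hy, thickColour_quarterTurn_blockCentre]
end

section
/- For k, t ∈ ℤ, the glide-reflection of the plane whose axis is the diagonal line y = x + k and whose glide is the translation by (t, t), inducing the cell map (i,j) ↦ (j − k + t, i + k + t), preserves the thick-striping doubled checkerboard colouring d if and only if k and t are both even. -/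
def thickStripe (i : ℤ) : ZMod 2 := (Int.fdiv i 2 : ℤ)

lemma thickColour_eq_thickStripe_add (i j : ℤ) :
    thickColour i j = thickStripe i + thickStripe j := by
  simp only [thickColour, thickStripe, Int.cast_add]

lemma thickStripe_add_two_mul (i a : ℤ) : thickStripe (i + 2 * a) = thickStripe i + a := by
  simp only [thickStripe, Int.add_mul_fdiv_left i a two_ne_zero, Int.cast_add]

lemma thickColour_add_two_mul_add_two_mul (i j a b : ℤ) :
    thickColour (i + 2 * a) (j + 2 * b) = thickColour i j + ((a + b : ℤ) : ZMod 2) := by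
  simp only [thickColour_eq_thickStripe_add, thickStripe_add_two_mul, Int.cast_add]
  ring

lemma even_of_thickStripe_add_eq_add_const {u : ℤ} {c : ZMod 2}
    (h : ∀ i, thickStripe (i + u) = thickStripe i + c) : Even u := by
  by_contra hu
  obtain ⟨m, rfl⟩ := Int.not_even_iff_odd.mp hu
  have step : ∀ i, thickStripe (i + 1) + m = thickStripe i + c := fun i ↦ by
    rw [← thickStripe_add_two_mul, ← h i, add_assoc, add_comm 1]
  -- `thickStripe` takes the values `0, 0, 1` at `0, 1, 2`
  have h₀ : 0 + (m : ZMod 2) = 0 + c := step 0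
  have h₁ : 1 + (m : ZMod 2) = 0 + c := step 1
  exact one_ne_zero (by linear_combination h₁ - h₀ : (1 : ZMod 2) = 0)

lemma thickColour_add_add_eq_iff (u v : ℤ) :
    (∀ i j, thickColour (i + u) (j + v) = thickColour i j) ↔ Even u ∧ Even v ∧ 4 ∣ u + v := by
  constructor
  · intro h
    have hu : Even u := even_of_thickStripe_add_eq_add_const (c := thickStripe 0 - thickStripe v)
      fun i ↦ by
        have hi := h i 0
        simp only [zero_add, thickColour_eq_thickStripe_add] at hi
        linear_combination hi
    have hv : Even v := even_of_thickStripe_add_eq_add_const (c := thickStripe 0 - thickStripe u)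
      fun j ↦ by
        have hj := h 0 j
        simp only [zero_add, thickColour_eq_thickStripe_add] at hj
        linear_combination hj
    obtain ⟨a, rfl⟩ := even_iff_two_dvd.mp hu
    obtain ⟨b, rfl⟩ := even_iff_two_dvd.mp hv
    have hab : Even (a + b) := by
      have h₀₀ := h 0 0
      rwa [thickColour_add_two_mul_add_two_mul, add_eq_left,
        ZMod.intCast_eq_zero_iff_even] at h₀₀
    simp only [Int.even_iff] at hab ⊢
    omega
  · rintro ⟨hu, hv, huv⟩ i j
    obtain ⟨a, rfl⟩ := even_iff_two_dvd.mp hu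
    obtain ⟨b, rfl⟩ := even_iff_two_dvd.mp hv
    have hab : Even (a + b) := by simp only [Int.even_iff]; omega
    rw [thickColour_add_two_mul_add_two_mul, ZMod.intCast_eq_zero_iff_even.mpr hab, add_zero]

/-- The glide-reflection with axis `y = x + k` and glide `(t, t)`, inducing the
cell map `(i,j) ↦ (j − k + t, i + k + t)`, preserves the thick-striping doubled
checkerboard colouring iff `k` and `t` are both even. -/
theorem glideReflection_preserves_thickColour_iff (k t : ℤ) :
    (∀ i j : ℤ, thickColour (j - k + t) (i + k + t) = thickColour i j) ↔
      (Even k ∧ Even t) := by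
  have glide_eq_translate : ∀ i j : ℤ,
      thickColour (j - k + t) (i + k + t) = thickColour (i + (k + t)) (j + (t - k)) := by
    intro i j
    rw [thickColour_comm]
    ring_nf
  simp only [glide_eq_translate, thickColour_add_add_eq_iff, Int.even_iff]
  omega
end
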